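/- arXiv:2312.12032 — 2 statements merged into one kernel-verified Lean document; each statement's English description precedes it below -/
import Mathlib

section
/- Let f : ℝⁿ → ℝ be weakly lower semismooth (locally Lipschitz, and for all x, v ∈ ℝⁿ and all sequences s_i ↘ 0, ξ_i ∈ ∂f(x + s_i v): limsup_i ⟨ξ_i, v⟩ ≤ liminf_{s↘0} (f(x+sv)-f(x))/s). Let x₀ ∈ ℝⁿ, ε > 0, c ∈ (0,1), ṽ ≠ 0 with f(x₀ + (ε/‖ṽ‖)ṽ) > f(x₀) - cε‖ṽ‖, and c̃ ∈ (c_min, c) where c_min := -(f(x₀ + (ε/‖ṽ‖)ṽ) - f(x₀))/(ε‖ṽ‖). Then Algorithm 2 (bisection on h_c̃(t) = f(x₀+tṽ) - f(x₀) + c̃t‖ṽ‖², stopping when a sampled subgradient ξ' ∈ ∂f(x₀ + t_j ṽ) satisfies ⟨ξ', ṽ⟩ > -c‖ṽ‖²) terminates after finitely many iterations, for any choice of sampled subgradients ξ' ∈ ∂f(x₀ + t_j ṽ). -/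
open Filter Set Topology RealInnerProductSpace

noncomputable def clarkeDir {E : Type*} [NormedAddCommGroup E] [InnerProductSpace ℝ E]
    (f : E → ℝ) (x v : E) : ℝ :=
  Filter.limsup (fun p : E × ℝ => (f (p.1 + p.2 • v) - f p.1) / p.2)
    ((nhds x) ×ˢ (nhdsWithin 0 (Set.Ioi 0)))

noncomputable def clarkeSubdiff {E : Type*} [NormedAddCommGroup E] [InnerProductSpace ℝ E]
    (f : E → ℝ) (x : E) : Set E :=
  {ξ | ∀ v, ⟪ξ, v⟫ ≤ clarkeDir f x v}

noncomputable def goldsteinSubdiff {E : Type*} [NormedAddCommGroup E] [InnerProductSpace ℝ E]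
    (f : E → ℝ) (ε : ℝ) (x : E) : Set E :=
  convexHull ℝ (⋃ y ∈ Metric.closedBall x ε, clarkeSubdiff f y)


def BisectStep (h : ℝ → ℝ) (a b : ℕ → ℝ) : Prop :=
  ∀ j, (h (b j) > h ((a j + b j) / 2) →
          a (j + 1) = (a j + b j) / 2 ∧ b (j + 1) = b j) ∧
       (¬ h (b j) > h ((a j + b j) / 2) →
          a (j + 1) = a j ∧ b (j + 1) = (a j + b j) / 2)

def WeaklyLowerSemismooth {E : Type*} [NormedAddCommGroup E] [InnerProductSpace ℝ E]
    (f : E → ℝ) : Prop :=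
  LocallyLipschitz f ∧
  ∀ (x v : E) (s : ℕ → ℝ) (ξ : ℕ → E),
    (∀ i, 0 < s i) → Tendsto s atTop (𝓝 0) →
    (∀ i, ξ i ∈ clarkeSubdiff f (x + s i • v)) →
    Filter.limsup (fun i => ⟪ξ i, v⟫) atTop ≤
      Filter.liminf (fun t : ℝ => (f (x + t • v) - f x) / t) (nhdsWithin 0 (Set.Ioi 0))

/-! Let `T` be the common limit of the bisection endpoints. Since `h = h_c̃` satisfies
`h (a j) < h (b j)` and `h (b j)` increases to `h T`, the left endpoint never reaches `T`, so it
moves infinitely often; at those steps the midpoint `t` satisfies `t < T` and `h t < h T`. Along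
them the difference quotients of `f` at `x₀ + T • ṽ` in direction `-ṽ` are below `c̃ ‖ṽ‖²`, while
if the algorithm never stopped, the sampled subgradients would give `⟪ξ', -ṽ⟫ ≥ c ‖ṽ‖²`. Weak
lower semismoothness forces `c ≤ c̃`. -/

section LipschitzBounds

variable {E : Type*} [SeminormedAddCommGroup E] [NormedSpace ℝ E]

lemma LipschitzOnWith.abs_slope_le {f : E → ℝ} {K : NNReal} {U : Set E}
    (hf : LipschitzOnWith K f U) {p v : E} {t : ℝ} (ht : 0 < t) (hp : p ∈ U)
    (hpt : p + t • v ∈ U) :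
    |(f (p + t • v) - f p) / t| ≤ K * ‖v‖ := by
  have hdist := hf.dist_le_mul _ hpt _ hp
  rw [Real.dist_eq, dist_eq_norm, add_sub_cancel_left, norm_smul, Real.norm_of_nonneg ht.le]
    at hdist
  rw [abs_div, abs_of_pos ht, div_le_iff₀ ht]
  linarith

lemma LipschitzOnWith.eventually_abs_slope_le {f : E → ℝ} {K : NNReal} {U : Set E} {y : E}
    (hU : U ∈ 𝓝 y) (hf : LipschitzOnWith K f U) (v : E) :
    ∀ᶠ q : E × ℝ in 𝓝 y ×ˢ 𝓝[>] 0, |(f (q.1 + q.2 • v) - f q.1) / q.2| ≤ K * ‖v‖ := by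
  have hmove : Tendsto (fun q : E × ℝ => q.1 + q.2 • v) (𝓝 y ×ˢ 𝓝[>] 0) (𝓝 y) := by
    have hle : 𝓝 y ×ˢ 𝓝[>] (0 : ℝ) ≤ 𝓝 (y, 0) :=
      nhds_prod_eq (x := y) (y := (0 : ℝ)) ▸ Filter.prod_mono le_rfl nhdsWithin_le_nhds
    have hcont : Continuous fun q : E × ℝ => q.1 + q.2 • v := by fun_prop
    simpa using (hcont.tendsto (y, 0)).mono_left hle
  filter_upwards [Filter.Eventually.prod_inl hU _, hmove hU,
    (eventually_mem_nhdsWithin : ∀ᶠ t in 𝓝[>] (0 : ℝ), t ∈ Ioi 0).prod_inr _] with q hq hqv hq0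
  exact hf.abs_slope_le hq0 hq hqv

end LipschitzBounds

section Clarke

variable {E : Type*} [NormedAddCommGroup E] [InnerProductSpace ℝ E]

lemma clarkeDir_le_of_lipschitzOnWith {f : E → ℝ} {K : NNReal} {U : Set E} {y : E}
    (hU : U ∈ 𝓝 y) (hf : LipschitzOnWith K f U) (v : E) :
    clarkeDir f y v ≤ K * ‖v‖ := by
  have hslope := hf.eventually_abs_slope_le hU v
  exact limsup_le_of_le
    (isCoboundedUnder_le_of_eventually_le _ (hslope.mono fun _ hq => (abs_le.mp hq).1))
    (hslope.mono fun _ hq => (abs_le.mp hq).2)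

namespace WeaklyLowerSemismooth

variable {f : E → ℝ}

theorem le_of_inner_ge_of_slope_le (hf : WeaklyLowerSemismooth f) {x v : E} {s : ℕ → ℝ}
    {ξ : ℕ → E} {α β : ℝ} (hs : ∀ i, 0 < s i) (hs0 : Tendsto s atTop (𝓝 0))
    (hξ : ∀ i, ξ i ∈ clarkeSubdiff f (x + s i • v)) (hα : ∀ i, α ≤ ⟪ξ i, v⟫)
    (hβ : ∀ i, (f (x + s i • v) - f x) / s i ≤ β) : α ≤ β := by
  obtain ⟨K, U, hU, hlip⟩ := hf.1 x
  have hpts : Tendsto (fun i => x + s i • v) atTop (𝓝 x) := by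
    simpa using tendsto_const_nhds.add (hs0.smul_const v)
  have hinner_le : ∀ᶠ i in atTop, ⟪ξ i, v⟫ ≤ K * ‖v‖ := by
    filter_upwards [hpts (interior_mem_nhds.mpr hU)] with i hi
    exact (hξ i v).trans <| clarkeDir_le_of_lipschitzOnWith (isOpen_interior.mem_nhds hi)
      (hlip.mono interior_subset) v
  have hslope_ge : ∀ᶠ t in 𝓝[>] (0 : ℝ), -(K * ‖v‖) ≤ (f (x + t • v) - f x) / t :=
    ((tendsto_const_nhds.prodMk tendsto_id).eventually (hlip.eventually_abs_slope_le hU v)).mono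
      fun _ ht => (abs_le.mp ht).1
  have hs' : Tendsto s atTop (𝓝[>] 0) := tendsto_nhdsWithin_iff.mpr ⟨hs0, .of_forall hs⟩
  calc α ≤ limsup (fun i => ⟪ξ i, v⟫) atTop :=
        le_limsup_of_frequently_le (.of_forall hα) (isBoundedUnder_of_eventually_le hinner_le)
    _ ≤ liminf (fun t : ℝ => (f (x + t • v) - f x) / t) (𝓝[>] 0) := hf.2 x v s ξ hs hs0 hξ
    _ ≤ β := liminf_le_of_frequently_le (hs'.frequently (.of_forall hβ))
        (isBoundedUnder_of_eventually_ge hslope_ge)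

theorem le_of_tendsto_from_left (hf : WeaklyLowerSemismooth f) {x₀ v : E} {t : ℕ → ℝ}
    {ξ : ℕ → E} {T α γ : ℝ} (ht : ∀ k, t k < T) (htT : Tendsto t atTop (𝓝 T))
    (hξ : ∀ k, ξ k ∈ clarkeSubdiff f (x₀ + t k • v)) (hα : ∀ k, ⟪ξ k, v⟫ ≤ -α)
    (hγ : ∀ k, f (x₀ + t k • v) + γ * t k < f (x₀ + T • v) + γ * T) : α ≤ γ := by
  have hpt : ∀ k, x₀ + t k • v = x₀ + T • v + (T - t k) • -v := fun k => by module
  refine hf.le_of_inner_ge_of_slope_le (s := fun k => T - t k) (fun k => sub_pos.2 (ht k))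
    (by simpa using (tendsto_const_nhds (x := T)).sub htT) (fun k => hpt k ▸ hξ k)
    (fun k => ?_) (fun k => ?_)
  · rw [inner_neg_right]
    linarith [hα k]
  · rw [← hpt k, div_le_iff₀ (sub_pos.2 (ht k))]
    linarith [hγ k]

end WeaklyLowerSemismooth

end Clarke

namespace BisectStep

variable {h : ℝ → ℝ} {a b : ℕ → ℝ}

lemma cases (hstep : BisectStep h a b) (j : ℕ) :
    (a (j + 1) = (a j + b j) / 2 ∧ b (j + 1) = b j ∧ h ((a j + b j) / 2) < h (b j)) ∨
      (a (j + 1) = a j ∧ b (j + 1) = (a j + b j) / 2 ∧ h (b j) ≤ h ((a j + b j) / 2)) := by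
  by_cases hj : h (b j) > h ((a j + b j) / 2)
  · exact .inl ⟨((hstep j).1 hj).1, ((hstep j).1 hj).2, hj⟩
  · exact .inr ⟨((hstep j).2 hj).1, ((hstep j).2 hj).2, not_lt.mp hj⟩

lemma sub_eq (hstep : BisectStep h a b) (j : ℕ) : b j - a j = (b 0 - a 0) / 2 ^ j := by
  induction j with
  | zero => simp
  | succ j ih =>
    rw [pow_succ, ← div_div, ← ih]
    rcases hstep.cases j with ⟨ha, hb, -⟩ | ⟨ha, hb, -⟩ <;> rw [ha, hb] <;> ring

lemma left_le_right (hstep : BisectStep h a b) (h0 : a 0 ≤ b 0) (j : ℕ) : a j ≤ b j := by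
  have := hstep.sub_eq j
  have : 0 ≤ (b 0 - a 0) / 2 ^ j := by positivity
  linarith

lemma monotone_left (hstep : BisectStep h a b) (h0 : a 0 ≤ b 0) : Monotone a := by
  refine monotone_nat_of_le_succ fun j => ?_
  have := hstep.left_le_right h0 j
  rcases hstep.cases j with ⟨ha, -, -⟩ | ⟨ha, -, -⟩ <;> linarith

lemma antitone_right (hstep : BisectStep h a b) (h0 : a 0 ≤ b 0) : Antitone b := by
  refine antitone_nat_of_succ_le fun j => ?_
  have := hstep.left_le_right h0 j
  rcases hstep.cases j with ⟨-, hb, -⟩ | ⟨-, hb, -⟩ <;> linarith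

lemma monotone_apply_right (hstep : BisectStep h a b) : Monotone (h ∘ b) := by
  refine monotone_nat_of_le_succ fun j => ?_
  rcases hstep.cases j with ⟨-, hb, -⟩ | ⟨-, hb, hle⟩
  · simp only [Function.comp_apply, hb, le_rfl]
  · simpa only [Function.comp_apply, hb] using hle

lemma apply_left_lt_apply_right (hstep : BisectStep h a b) (h0 : h (a 0) < h (b 0)) (j : ℕ) :
    h (a j) < h (b j) := by
  induction j with
  | zero => exact h0
  | succ j ih =>
    rcases hstep.cases j with ⟨ha, hb, hlt⟩ | ⟨ha, hb, hle⟩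
    · rwa [ha, hb]
    · rw [ha, hb]
      exact ih.trans_le hle

lemma exists_tendsto (hstep : BisectStep h a b) (h0 : a 0 ≤ b 0) :
    ∃ T, Tendsto a atTop (𝓝 T) ∧ Tendsto b atTop (𝓝 T) := by
  have hbdd : BddAbove (range a) := ⟨b 0, forall_mem_range.mpr fun j =>
    (hstep.left_le_right h0 j).trans (hstep.antitone_right h0 j.zero_le)⟩
  have hgap : Tendsto (fun j => b j - a j) atTop (𝓝 0) := by
    refine (tendsto_const_nhds.div_atTop (tendsto_pow_atTop_atTop_of_one_lt one_lt_two)).congr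
      fun j => (hstep.sub_eq j).symm
  have ha := tendsto_atTop_ciSup (hstep.monotone_left h0) hbdd
  exact ⟨_, ha, by simpa using ha.add hgap⟩

theorem exists_seq_mid_lt (hstep : BisectStep h a b) (hc : Continuous h) (h0 : a 0 ≤ b 0)
    (hh0 : h (a 0) < h (b 0)) :
    ∃ T, ∃ φ : ℕ → ℕ, Tendsto (fun k => (a (φ k) + b (φ k)) / 2) atTop (𝓝 T) ∧
      ∀ k, (a (φ k) + b (φ k)) / 2 < T ∧ h ((a (φ k) + b (φ k)) / 2) < h T := by
  obtain ⟨T, ha, hb⟩ := hstep.exists_tendsto h0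
  have hle_T : ∀ j, h (b j) ≤ h T :=
    hstep.monotone_apply_right.ge_of_tendsto ((hc.tendsto T).comp hb)
  have hlt_T : ∀ j, a j < T := fun j =>
    ((hstep.monotone_left h0).ge_of_tendsto ha j).lt_of_ne fun hj =>
      (hstep.apply_left_lt_apply_right hh0 j).not_ge (hj ▸ hle_T j)
  -- the left endpoint never reaches `T`, so it moves infinitely often, each time onto the midpoint
  have hmoves : ∃ᶠ j in atTop, a (j + 1) = (a j + b j) / 2 := by
    refine fun hstays => ?_
    obtain ⟨J, hJ⟩ := eventually_atTop.mp hstays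
    have hconst : ∀ j ≥ J, a j = a J := fun j hj => by
      induction j, hj using Nat.le_induction with
      | base => rfl
      | succ j hj ih =>
        rcases hstep.cases j with ⟨hmid, -, -⟩ | ⟨hsame, -, -⟩
        · exact absurd hmid (hJ j hj)
        · rw [hsame, ih]
    have : T = a J := tendsto_nhds_unique ha <|
      tendsto_const_nhds.congr' (eventually_atTop.mpr ⟨J, fun j hj => (hconst j hj).symm⟩)
    exact (hlt_T J).ne this.symm
  obtain ⟨φ, hφ, hmid⟩ := extraction_of_frequently_atTop hmoves
  refine ⟨T, φ, ?_, fun k => ?_⟩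
  · have hmidT := ((ha.add hb).div_const 2).comp hφ.tendsto_atTop
    rwa [add_self_div_two] at hmidT
  · rw [← hmid k]
    exact ⟨hlt_T _, (hstep.apply_left_lt_apply_right hh0 _).trans_le (hle_T _)⟩

end BisectStep

theorem stmt9_general {n : ℕ} (f : EuclideanSpace ℝ (Fin n) → ℝ)
    (hf : WeaklyLowerSemismooth f)
    (x₀ vtil : EuclideanSpace ℝ (Fin n)) (hv : vtil ≠ 0)
    (ε c ctil : ℝ) (hε : 0 < ε)
    (hctil : ctil ∈ Set.Ioo (-((f (x₀ + (ε / ‖vtil‖) • vtil) - f x₀) / (ε * ‖vtil‖))) c)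
    (a b : ℕ → ℝ) (ha0 : a 0 = 0) (hb0 : b 0 = ε / ‖vtil‖)
    (hstep : BisectStep (fun t => f (x₀ + t • vtil) - f x₀ + ctil * t * ‖vtil‖^2) a b)
    (ξ' : ℕ → EuclideanSpace ℝ (Fin n))
    (hξ' : ∀ j, ξ' j ∈ clarkeSubdiff f (x₀ + ((a j + b j) / 2) • vtil)) :
    ∃ j, ⟪ξ' j, vtil⟫ > -c * ‖vtil‖^2 := by
  by_contra! hstop
  have hvtil : 0 < ‖vtil‖ := norm_pos_iff.mpr hv
  have hcont : Continuous fun t : ℝ => f (x₀ + t • vtil) - f x₀ + ctil * t * ‖vtil‖^2 := by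
    have := hf.1.continuous
    fun_prop
  have hh0 : f (x₀ + a 0 • vtil) - f x₀ + ctil * a 0 * ‖vtil‖^2 <
      f (x₀ + b 0 • vtil) - f x₀ + ctil * b 0 * ‖vtil‖^2 := by
    have hslope := hctil.1
    rw [← neg_div, div_lt_iff₀ (by positivity)] at hslope
    have hscale : ctil * (ε / ‖vtil‖) * ‖vtil‖ ^ 2 = ctil * (ε * ‖vtil‖) := by
      field_simp
    simp only [ha0, hb0, zero_smul, add_zero, sub_self, mul_zero, zero_mul, hscale]
    linarith
  obtain ⟨T, φ, hT, hφ⟩ :=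
    hstep.exists_seq_mid_lt hcont (by rw [ha0, hb0]; positivity) hh0
  have hcle : c * ‖vtil‖ ^ 2 ≤ ctil * ‖vtil‖ ^ 2 :=
    hf.le_of_tendsto_from_left (fun k => (hφ k).1) hT (fun k => hξ' (φ k))
      (fun k => by linarith [hstop (φ k)]) (fun k => by linarith [(hφ k).2])
  exact hctil.2.not_ge (le_of_mul_le_mul_right hcle (by positivity))

theorem stmt9 {n : ℕ} (f : EuclideanSpace ℝ (Fin n) → ℝ)
    (hf : WeaklyLowerSemismooth f)
    (x₀ vtil : EuclideanSpace ℝ (Fin n)) (hv : vtil ≠ 0)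
    (ε c ctil : ℝ) (hε : 0 < ε) (hc : c ∈ Set.Ioo (0:ℝ) 1)
    (hbad : f (x₀ + (ε / ‖vtil‖) • vtil) > f x₀ - c * ε * ‖vtil‖)
    (hctil : ctil ∈ Set.Ioo (-((f (x₀ + (ε / ‖vtil‖) • vtil) - f x₀) / (ε * ‖vtil‖))) c)
    (a b : ℕ → ℝ) (ha0 : a 0 = 0) (hb0 : b 0 = ε / ‖vtil‖)
    (hstep : BisectStep (fun t => f (x₀ + t • vtil) - f x₀ + ctil * t * ‖vtil‖^2) a b)
    (ξ' : ℕ → EuclideanSpace ℝ (Fin n))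
    (hξ' : ∀ j, ξ' j ∈ clarkeSubdiff f (x₀ + ((a j + b j) / 2) • vtil)) :
    ∃ j, ⟪ξ' j, vtil⟫ > -c * ‖vtil‖^2 :=
  stmt9_general f hf x₀ vtil hv ε c ctil hε hctil a b ha0 hb0 hstep ξ' hξ'
end

section
/- If f : ℝⁿ → ℝ is locally Lipschitz, x₀, ṽ ∈ ℝⁿ, c̃ ∈ ℝ, and h_c̃(t) := f(x₀ + tṽ) - f(x₀) + c̃ t ‖ṽ‖², then the Clarke subdifferential satisfies ∂h_c̃(t) ⊆ {⟨ξ, ṽ⟩ + c̃‖ṽ‖² : ξ ∈ ∂f(x₀ + tṽ)} for every t ∈ ℝ. -/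
/-!
For locally Lipschitz `f` the Clarke directional derivative `f°(x; ·)` is sublinear and bounded
by `K ‖·‖`. The difference quotients of `h(s) = f(x₀ + s ṽ) - f(x₀) + c̃ s ‖ṽ‖²` at `(s, σ)` are
those of `f` at `(x₀ + s ṽ, σ)` in direction `v ṽ`, shifted by `c̃ v ‖ṽ‖²`, so
`h°(t; v) ≤ f°(x₀ + t ṽ; v ṽ) + c̃ v ‖ṽ‖²`. Hence for `g ∈ ∂h(t)` the functional
`c ṽ ↦ c (g - c̃ ‖ṽ‖²)` on the line `ℝ ṽ` is dominated by `f°(x₀ + t ṽ; ·)`, and Hahn–Banach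
extends it to some `ξ ∈ ∂f(x₀ + t ṽ)` with `⟪ξ, ṽ⟫ = g - c̃ ‖ṽ‖²`.
-/

open Filter Set Topology RealInnerProductSpace

def clarkeFilter {X : Type*} [TopologicalSpace X] (x : X) : Filter (X × ℝ) := 𝓝 x ×ˢ 𝓝[>] 0

instance {X : Type*} [TopologicalSpace X] (x : X) : (clarkeFilter x).NeBot := by
  unfold clarkeFilter; infer_instance

lemma eventually_clarkeFilter_snd_pos {X : Type*} [TopologicalSpace X] (x : X) :
    ∀ᶠ p in clarkeFilter x, 0 < p.2 :=
  tendsto_snd.eventually self_mem_nhdsWithin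

lemma tendsto_clarkeFilter_mul_snd {X : Type*} [TopologicalSpace X] (x : X) {c : ℝ}
    (hc : 0 < c) :
    Tendsto (fun p : X × ℝ => (p.1, c * p.2)) (clarkeFilter x) (clarkeFilter x) := by
  refine tendsto_fst.prodMk (tendsto_nhdsWithin_iff.2 ⟨?_, ?_⟩)
  · simpa using ((tendsto_snd.mono_right nhdsWithin_le_nhds).const_mul c :
      Tendsto _ (clarkeFilter x) _)
  · filter_upwards [eventually_clarkeFilter_snd_pos x] with p hp using mul_pos hc hp

noncomputable def diffQuot {V : Type*} [AddCommGroup V] [Module ℝ V] (f : V → ℝ) (v : V)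
    (p : V × ℝ) : ℝ :=
  (f (p.1 + p.2 • v) - f p.1) / p.2

section ClarkeDir

variable {E : Type*} [NormedAddCommGroup E] [InnerProductSpace ℝ E] {f : E → ℝ}

lemma clarkeDir_eq_limsup (f : E → ℝ) (x v : E) :
    clarkeDir f x v = limsup (diffQuot f v) (clarkeFilter x) := rfl

lemma LocallyLipschitz.exists_eventually_abs_diffQuot_le (hf : LocallyLipschitz f) (x : E) :
    ∃ K : ℝ, ∀ v, ∀ᶠ p in clarkeFilter x, |diffQuot f v p| ≤ K * ‖v‖ := by
  obtain ⟨K, U, hU, hK⟩ := hf x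
  refine ⟨K, fun v => ?_⟩
  have hshift : Tendsto (fun p : E × ℝ => p.1 + p.2 • v) (clarkeFilter x) (𝓝 x) := by
    simpa [clarkeFilter] using tendsto_fst.add
      ((tendsto_snd.mono_right nhdsWithin_le_nhds).smul_const v : Tendsto _ (clarkeFilter x) _)
  filter_upwards [tendsto_fst.eventually hU, hshift.eventually hU,
    eventually_clarkeFilter_snd_pos x] with p hp hpv hσ
  rw [diffQuot, abs_div, abs_of_pos hσ, div_le_iff₀ hσ, ← Real.dist_eq]
  calc dist (f (p.1 + p.2 • v)) (f p.1) ≤ K * dist (p.1 + p.2 • v) p.1 :=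
        hK.dist_le_mul _ hpv _ hp
    _ = K * ‖v‖ * p.2 := by
        rw [dist_eq_norm, add_sub_cancel_left, norm_smul, Real.norm_of_nonneg hσ.le]; ring

lemma LocallyLipschitz.isBoundedUnder_diffQuot_comp (hf : LocallyLipschitz f) {x : E}
    {α : Type*} {F : Filter α} {m : α → E × ℝ} (hm : Tendsto m F (clarkeFilter x)) (v : E) :
    F.IsBoundedUnder (· ≤ ·) (diffQuot f v ∘ m) ∧ F.IsBoundedUnder (· ≥ ·) (diffQuot f v ∘ m) := by
  obtain ⟨K, hK⟩ := hf.exists_eventually_abs_diffQuot_le x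
  exact isBoundedUnder_le_abs.1 ⟨K * ‖v‖, eventually_map.2 (hm.eventually (hK v))⟩

lemma LocallyLipschitz.limsup_diffQuot_comp_le (hf : LocallyLipschitz f) {x : E}
    {α : Type*} {F : Filter α} [F.NeBot] {m : α → E × ℝ} (hm : Tendsto m F (clarkeFilter x))
    (v : E) :
    limsup (diffQuot f v ∘ m) F ≤ clarkeDir f x v :=
  hm.limsup_comp_le_limsup (hf.isBoundedUnder_diffQuot_comp hm v).2.isCoboundedUnder_le
    (hf.isBoundedUnder_diffQuot_comp tendsto_id v).1

lemma LocallyLipschitz.exists_clarkeDir_le_mul_norm (hf : LocallyLipschitz f) (x : E) :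
    ∃ K : ℝ, ∀ v, clarkeDir f x v ≤ K * ‖v‖ := by
  obtain ⟨K, hK⟩ := hf.exists_eventually_abs_diffQuot_le x
  refine ⟨K, fun v => limsup_le_of_le
    (hf.isBoundedUnder_diffQuot_comp tendsto_id v).2.isCoboundedUnder_le ?_⟩
  exact (hK v).mono fun p hp => (abs_le.1 hp).2

lemma clarkeDir_zero (f : E → ℝ) (x : E) : clarkeDir f x 0 = 0 := by
  simp [clarkeDir]

lemma LocallyLipschitz.clarkeDir_smul_le (hf : LocallyLipschitz f) (x : E) {c : ℝ} (hc : 0 < c)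
    (v : E) : clarkeDir f x (c • v) ≤ c * clarkeDir f x v := by
  set m := fun p : E × ℝ => (p.1, c * p.2)
  have hm := tendsto_clarkeFilter_mul_snd x hc
  have hquot : diffQuot f (c • v) =ᶠ[clarkeFilter x] fun p => c * (diffQuot f v ∘ m) p := by
    filter_upwards [eventually_clarkeFilter_snd_pos x] with p hp
    simp only [diffQuot, Function.comp, m, smul_smul, mul_comm p.2 c]
    field_simp
  obtain ⟨hbdd, hbdd'⟩ := hf.isBoundedUnder_diffQuot_comp hm v
  have hmul : limsup (fun p => c * (diffQuot f v ∘ m) p) (clarkeFilter x) =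
      c * limsup (diffQuot f v ∘ m) (clarkeFilter x) :=
    ((monotone_mul_left_of_nonneg hc.le).map_limsup_of_continuousAt _
      (continuous_const_mul c).continuousAt hbdd hbdd'.isCoboundedUnder_le).symm
  rw [clarkeDir_eq_limsup, limsup_congr hquot, hmul]
  exact mul_le_mul_of_nonneg_left (hf.limsup_diffQuot_comp_le hm v) hc.le

lemma LocallyLipschitz.clarkeDir_smul (hf : LocallyLipschitz f) (x : E) {c : ℝ} (hc : 0 < c)
    (v : E) : clarkeDir f x (c • v) = c * clarkeDir f x v := by
  refine le_antisymm (hf.clarkeDir_smul_le x hc v) ?_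
  have := hf.clarkeDir_smul_le x (inv_pos.2 hc) (c • v)
  rw [inv_smul_smul₀ hc.ne'] at this
  rwa [← le_div_iff₀' hc, div_eq_inv_mul]

lemma LocallyLipschitz.clarkeDir_add_le (hf : LocallyLipschitz f) (x v w : E) :
    clarkeDir f x (v + w) ≤ clarkeDir f x v + clarkeDir f x w := by
  set m := fun p : E × ℝ => (p.1 + p.2 • w, p.2)
  have hm : Tendsto m (clarkeFilter x) (clarkeFilter x) := by
    refine Tendsto.prodMk ?_ tendsto_snd
    simpa [clarkeFilter] using tendsto_fst.add
      ((tendsto_snd.mono_right nhdsWithin_le_nhds).smul_const w : Tendsto _ (clarkeFilter x) _)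
  have hquot : diffQuot f (v + w) = diffQuot f v ∘ m + diffQuot f w := by
    ext p
    simp only [diffQuot, Pi.add_apply, Function.comp, m]
    rw [smul_add, ← add_assoc, add_right_comm]
    ring
  obtain ⟨hv, hv'⟩ := hf.isBoundedUnder_diffQuot_comp hm v
  obtain ⟨hw, hw'⟩ := hf.isBoundedUnder_diffQuot_comp tendsto_id w
  rw [clarkeDir_eq_limsup, hquot]
  exact (limsup_add_le hv' hv hw'.isCoboundedUnder_le hw).trans
    (add_le_add (hf.limsup_diffQuot_comp_le hm v) le_rfl)

lemma clarkeDir_sub_const (f : E → ℝ) (b : ℝ) (x v : E) :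
    clarkeDir (fun y => f y - b) x v = clarkeDir f x v := by
  simp [clarkeDir]

lemma LocallyLipschitz.clarkeDir_add_linearMap (hf : LocallyLipschitz f) (ℓ : E →ₗ[ℝ] ℝ)
    (x v : E) : clarkeDir (fun y => f y + ℓ y) x v = clarkeDir f x v + ℓ v := by
  have hquot :
      diffQuot (fun y => f y + ℓ y) v =ᶠ[clarkeFilter x] fun p => diffQuot f v p + ℓ v := by
    filter_upwards [eventually_clarkeFilter_snd_pos x] with p hp
    simp only [diffQuot, map_add, map_smul, smul_eq_mul]
    field_simp
    ring
  obtain ⟨hbdd, hbdd'⟩ := hf.isBoundedUnder_diffQuot_comp tendsto_id v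
  rw [clarkeDir_eq_limsup, limsup_congr hquot]
  exact limsup_add_const _ _ _ hbdd hbdd'.isCoboundedUnder_le

lemma LocallyLipschitz.clarkeDir_comp_add_le {F : Type*} [NormedAddCommGroup F]
    [InnerProductSpace ℝ F] (hf : LocallyLipschitz f) (x₀ : E) (L : F →L[ℝ] E) (y v : F) :
    clarkeDir (fun z => f (x₀ + L z)) y v ≤ clarkeDir f (x₀ + L y) (L v) := by
  have hm : Tendsto (fun p : F × ℝ => (x₀ + L p.1, p.2)) (clarkeFilter y)
      (clarkeFilter (x₀ + L y)) :=
    (((L.continuous.const_add x₀).tendsto y).comp tendsto_fst).prodMk tendsto_snd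
  have hquot : diffQuot (fun z => f (x₀ + L z)) v =
      diffQuot f (L v) ∘ fun p : F × ℝ => (x₀ + L p.1, p.2) := by
    ext p
    simp only [diffQuot, Function.comp, map_add, map_smul, add_assoc]
  rw [clarkeDir_eq_limsup, hquot]
  exact hf.limsup_diffQuot_comp_le hm (L v)

theorem LocallyLipschitz.exists_mem_clarkeSubdiff_inner_eq [CompleteSpace E]
    (hf : LocallyLipschitz f) (x : E) {u : E} {α : ℝ}
    (hα : ∀ c : ℝ, α * c ≤ clarkeDir f x (c • u)) :
    ∃ ξ ∈ clarkeSubdiff f x, ⟪ξ, u⟫ = α := by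
  -- makes `c • u ↦ c * α` well defined on `ℝ ∙ u`, also when `u = 0`
  have hα0 : ∀ c : ℝ, c • u = 0 → c • α = 0 := by
    intro c hc
    have h₁ := hα c
    have h₂ := hα (-c)
    rw [hc, clarkeDir_zero] at h₁
    rw [neg_smul, hc, neg_zero, clarkeDir_zero] at h₂
    rw [smul_eq_mul]
    linarith
  let g₀ : E →ₗ.[ℝ] ℝ := LinearPMap.mkSpanSingleton' u α hα0
  have hg₀ : ∀ z : g₀.domain, g₀ z ≤ clarkeDir f x z := by
    rintro ⟨z, hz⟩
    obtain ⟨c, rfl⟩ := Submodule.mem_span_singleton.1 hz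
    rw [LinearPMap.mkSpanSingleton'_apply, smul_eq_mul, mul_comm]
    exact hα c
  obtain ⟨g, hg_ext, hg_le⟩ := exists_extension_of_le_sublinear g₀ (clarkeDir f x)
    (fun c hc v => hf.clarkeDir_smul x hc v) (hf.clarkeDir_add_le x) hg₀
  obtain ⟨K, hK⟩ := hf.exists_clarkeDir_le_mul_norm x
  have hg_bound : ∀ v, ‖g v‖ ≤ K * ‖v‖ := fun v => by
    refine abs_le.2 ⟨?_, (hg_le v).trans (hK v)⟩
    have := (hg_le (-v)).trans (hK (-v))
    rw [map_neg, norm_neg] at this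
    linarith
  refine ⟨(InnerProductSpace.toDual ℝ E).symm (g.mkContinuous K hg_bound), fun v => ?_, ?_⟩
  · rw [InnerProductSpace.toDual_symm_apply]
    exact hg_le v
  · rw [InnerProductSpace.toDual_symm_apply, LinearMap.mkContinuous_apply,
      ← LinearPMap.mkSpanSingleton'_apply_self (σ := RingHom.id ℝ) u α hα0
        (Submodule.mem_span_singleton_self u)]
    exact hg_ext ⟨u, _⟩

lemma LocallyLipschitz.clarkeDir_line_add_mul_le (hf : LocallyLipschitz f) (x₀ u : E)
    (a t v : ℝ) :
    clarkeDir (fun s : ℝ => f (x₀ + s • u) - f x₀ + a * s) t v ≤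
      clarkeDir f (x₀ + t • u) (v • u) + a * v := by
  let L := ContinuousLinearMap.toSpanSingleton ℝ u
  have hline : LocallyLipschitz fun s : ℝ => f (x₀ + L s) :=
    hf.comp ((IsometryEquiv.addLeft x₀).isometry.lipschitz.comp L.lipschitz).locallyLipschitz
  have hfun : (fun s : ℝ => f (x₀ + s • u) - f x₀ + a * s) =
      fun s => (f (x₀ + L s) + (a • LinearMap.id : ℝ →ₗ[ℝ] ℝ) s) - f x₀ := by
    ext s
    simp only [L, ContinuousLinearMap.toSpanSingleton_apply, LinearMap.smul_apply,
      LinearMap.id_apply, smul_eq_mul]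
    ring
  calc clarkeDir (fun s : ℝ => f (x₀ + s • u) - f x₀ + a * s) t v
      = clarkeDir (fun s : ℝ => f (x₀ + L s)) t v + a * v := by
        rw [hfun, clarkeDir_sub_const, hline.clarkeDir_add_linearMap]
        rfl
    _ ≤ clarkeDir f (x₀ + t • u) (v • u) + a * v :=
        add_le_add_left (hf.clarkeDir_comp_add_le x₀ L t v) _

end ClarkeDir

theorem stmt10 {n : ℕ} (f : EuclideanSpace ℝ (Fin n) → ℝ) (hf : LocallyLipschitz f)
    (x₀ vtil : EuclideanSpace ℝ (Fin n)) (ctil : ℝ) :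
    ∀ t : ℝ,
      clarkeSubdiff (fun s : ℝ => f (x₀ + s • vtil) - f x₀ + ctil * s * ‖vtil‖^2) t ⊆
        {g : ℝ | ∃ ξ ∈ clarkeSubdiff f (x₀ + t • vtil), g = ⟪ξ, vtil⟫ + ctil * ‖vtil‖^2} := by
  intro t g hg
  have hfun : (fun s : ℝ => f (x₀ + s • vtil) - f x₀ + ctil * s * ‖vtil‖^2) =
      fun s => f (x₀ + s • vtil) - f x₀ + ctil * ‖vtil‖^2 * s := by
    ext s; ring
  rw [hfun] at hg
  obtain ⟨ξ, hξ, hξv⟩ := hf.exists_mem_clarkeSubdiff_inner_eq (x₀ + t • vtil)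
    (u := vtil) (α := g - ctil * ‖vtil‖^2) fun c => by
      have hgc := (hg c).trans (hf.clarkeDir_line_add_mul_le x₀ vtil _ t c)
      rw [RCLike.inner_apply, conj_trivial] at hgc
      linarith
  exact ⟨ξ, hξ, by rw [hξv]; ring⟩
end
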